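/- Let α₁, α₂ be locally measurable functions on [0,∞) with α_j(t) ≤ t for t ≥ 0 and lim_{t→∞} α_j(t) = ∞ for j = 1,2. Then the equation φ''(t) + sin²(t)·φ(α₁(t)) + cos²(t)·φ(α₂(t)) − φ(t) = cos(sin(ln(1+t))), t ≥ 0, is nonoscillatory. -/

import Mathlib

open MeasureTheory Real Set

/-- `φ` is a solution, defined from `t₁ ≥ t₀` onwards, of the second order
functional-differential equation `(p φ')' + q φ' + ∑ j, r j t · φ (α j t) = f t`:
a continuous function on `ℝ`, continuously differentiable on `[t₁, ∞)` with derivative `φd`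
there, such that `p·φd` is absolutely continuous on `[t₁, ∞)` and the equation holds almost
everywhere on `[t₁, ∞)` (encoded in integral form). -/
def IsSolutionFrom (t₀ : ℝ) (p q f : ℝ → ℝ) (n : ℕ) (r α : Fin n → ℝ → ℝ)
    (t₁ : ℝ) (φ : ℝ → ℝ) : Prop :=
  t₀ ≤ t₁ ∧ Continuous φ ∧ ∃ φd : ℝ → ℝ,
    ContinuousOn φd (Ici t₁) ∧
    (∀ t ∈ Ici t₁, HasDerivWithinAt φ (φd t) (Ici t₁) t) ∧
    ∀ t ∈ Ici t₁,
      IntervalIntegrable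
        (fun s => f s - q s * φd s - ∑ j : Fin n, r j s * φ (α j s)) volume t₁ t ∧
      p t * φd t = p t₁ * φd t₁ +
        ∫ s in t₁..t, (f s - q s * φd s - ∑ j : Fin n, r j s * φ (α j s))

/-- `φ` is a solution of `(p φ')' + q φ' + ∑ j, r j t · φ (α j t) = f t`, i.e. a solution
defined from some `t₁ ≥ t₀`. -/
def IsSolution (t₀ : ℝ) (p q f : ℝ → ℝ) (n : ℕ) (r α : Fin n → ℝ → ℝ) (φ : ℝ → ℝ) : Prop :=
  ∃ t₁ : ℝ, IsSolutionFrom t₀ p q f n r α t₁ φ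

/-- The equation `(p φ')' + q φ' + ∑ j, r j t · φ (α j t) = f t` is oscillatory:
every solution has arbitrarily large zeroes. -/
def EquationOscillatory (t₀ : ℝ) (p q f : ℝ → ℝ) (n : ℕ) (r α : Fin n → ℝ → ℝ) : Prop :=
  ∀ φ : ℝ → ℝ, IsSolution t₀ p q f n r α φ → ∀ T : ℝ, ∃ t, T ≤ t ∧ φ t = 0

/-- The equation is oscillatory on the interval `[a, b]`: every solution vanishes
somewhere on `[a, b]`. -/
def EquationOscillatoryOn (t₀ : ℝ) (p q f : ℝ → ℝ) (n : ℕ) (r α : Fin n → ℝ → ℝ)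
    (a b : ℝ) : Prop :=
  ∀ φ : ℝ → ℝ, IsSolution t₀ p q f n r α φ → ∃ t ∈ Icc a b, φ t = 0

/-! Writing `φ = 1 + U`, the equation becomes
`U'' = f + sin² t · (U t - U (α₁ t)) + cos² t · (U t - U (α₂ t))` because `sin² + cos² = 1`.
For nondecreasing `U` and `f ≥ 0` the right-hand side is nonnegative, so `U ≥ 0` and `φ ≥ 1`
on `[0, ∞)`. Such a `U` is the primitive of a fixed point `u` of
`u ↦ (t ↦ ∫₀ᵗ (f + Σ r_j (U s - U (α_j s))))`, which is a `1/4`-contraction for the sup norm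
weighted by `e^{-2t}` (as `Σ r_j ≤ 1` and `α_j t ≤ t`) and preserves nonnegativity. Replacing
`α_j t` by `min (α_j t) t` makes `α_j t ≤ t` hold everywhere without changing anything on
`[0, ∞)`. -/

namespace AveragedDelayEquation

open BoundedContinuousFunction

lemma integral_exp_two_mul (a b : ℝ) :
    ∫ s in a..b, exp (2 * s) = (exp (2 * b) - exp (2 * a)) / 2 := by
  rw [intervalIntegral.integral_comp_mul_left (fun x => exp x) two_ne_zero, integral_exp,
    smul_eq_mul]
  ring

lemma abs_integral_le_of_abs_le_exp {h : ℝ → ℝ} {A B t : ℝ} (hA : 0 ≤ A) (hB : 0 ≤ B)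
    (ht : 0 ≤ t) (hh : ∀ s, 0 ≤ s → |h s| ≤ A + B * exp (2 * s)) :
    |∫ s in 0..t, h s| ≤ (A + B / 2) * exp (2 * t) := by
  have hbound : IntervalIntegrable (fun s => A + B * exp (2 * s)) volume 0 t := by
    apply Continuous.intervalIntegrable; fun_prop
  have hlin : t ≤ exp (2 * t) := by linarith [add_one_le_exp (2 * t)]
  calc |∫ s in 0..t, h s|
      ≤ ∫ s in 0..t, (A + B * exp (2 * s)) := by
        refine (Real.norm_eq_abs _).symm.trans_le
          (intervalIntegral.norm_integral_le_of_norm_le ht (ae_of_all _ fun s hs => ?_) hbound)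
        rw [Real.norm_eq_abs]
        exact hh s hs.1.le
    _ = A * t + B * (exp (2 * t) - 1) / 2 := by
        rw [intervalIntegral.integral_add intervalIntegrable_const
            (by apply Continuous.intervalIntegrable; fun_prop),
          intervalIntegral.integral_const, intervalIntegral.integral_const_mul,
          integral_exp_two_mul, mul_zero, exp_zero, sub_zero, smul_eq_mul]
        ring
    _ ≤ (A + B / 2) * exp (2 * t) := by nlinarith [mul_le_mul_of_nonneg_left hlin hA]

noncomputable def weighted (v : ℝ →ᵇ ℝ) (t : ℝ) : ℝ := exp (2 * t) * v t

noncomputable def weightedPrimitive (v : ℝ →ᵇ ℝ) (t : ℝ) : ℝ := ∫ s in 0..t, weighted v s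

lemma continuous_weighted (v : ℝ →ᵇ ℝ) : Continuous (weighted v) := by
  unfold weighted; fun_prop

lemma abs_weighted_le (v : ℝ →ᵇ ℝ) (t : ℝ) : |weighted v t| ≤ ‖v‖ * exp (2 * t) := by
  rw [weighted, abs_mul, abs_exp, mul_comm]
  exact mul_le_mul_of_nonneg_right (v.norm_coe_le_norm t) (exp_pos _).le

lemma hasDerivAt_weightedPrimitive (v : ℝ →ᵇ ℝ) (t : ℝ) :
    HasDerivAt (weightedPrimitive v) (weighted v t) t :=
  ((continuous_weighted v).integral_hasStrictDerivAt 0 t).hasDerivAt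

lemma continuous_weightedPrimitive (v : ℝ →ᵇ ℝ) : Continuous (weightedPrimitive v) :=
  continuous_iff_continuousAt.2 fun t => (hasDerivAt_weightedPrimitive v t).continuousAt

lemma weightedPrimitive_sub_weightedPrimitive (v : ℝ →ᵇ ℝ) (a b : ℝ) :
    weightedPrimitive v b - weightedPrimitive v a = ∫ s in a..b, weighted v s :=
  intervalIntegral.integral_interval_sub_left ((continuous_weighted v).intervalIntegrable _ _)
    ((continuous_weighted v).intervalIntegrable _ _)

lemma weightedPrimitive_sub (v w : ℝ →ᵇ ℝ) (t : ℝ) :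
    weightedPrimitive (v - w) t = weightedPrimitive v t - weightedPrimitive w t := by
  rw [weightedPrimitive, weightedPrimitive, weightedPrimitive, ← intervalIntegral.integral_sub
    ((continuous_weighted v).intervalIntegrable _ _)
    ((continuous_weighted w).intervalIntegrable _ _)]
  simp only [weighted, coe_sub, Pi.sub_apply, mul_sub]

lemma weightedPrimitive_mono {v : ℝ →ᵇ ℝ} (hv : ∀ t, 0 ≤ v t) :
    Monotone (weightedPrimitive v) := fun a b hab => by
  rw [← sub_nonneg, weightedPrimitive_sub_weightedPrimitive]
  exact intervalIntegral.integral_nonneg hab fun s _ => mul_nonneg (exp_pos _).le (hv s)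

lemma abs_weightedPrimitive_sub_le (v : ℝ →ᵇ ℝ) {a b : ℝ} (hab : a ≤ b) :
    |weightedPrimitive v b - weightedPrimitive v a| ≤ ‖v‖ * exp (2 * b) / 2 := by
  have hbound : IntervalIntegrable (fun s => ‖v‖ * exp (2 * s)) volume a b := by
    apply Continuous.intervalIntegrable; fun_prop
  rw [weightedPrimitive_sub_weightedPrimitive]
  calc |∫ s in a..b, weighted v s|
      ≤ ∫ s in a..b, ‖v‖ * exp (2 * s) := by
        refine (Real.norm_eq_abs _).symm.trans_le
          (intervalIntegral.norm_integral_le_of_norm_le hab (ae_of_all _ fun s _ => ?_) hbound)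
        rw [Real.norm_eq_abs]
        exact abs_weighted_le v s
    _ = ‖v‖ * (exp (2 * b) - exp (2 * a)) / 2 := by
        rw [intervalIntegral.integral_const_mul, integral_exp_two_mul, mul_div_assoc]
    _ ≤ ‖v‖ * exp (2 * b) / 2 := by
        gcongr
        linarith [exp_pos (2 * a)]

section DelayTerm

variable {ι : Type*} [Fintype ι] (r α : ι → ℝ → ℝ)

noncomputable def delayTerm (v : ℝ →ᵇ ℝ) (s : ℝ) : ℝ :=
  ∑ j, r j s * (weightedPrimitive v s - weightedPrimitive v (α j s))

variable {r α}

lemma measurable_delayTerm (hr : ∀ j, Measurable (r j)) (hα : ∀ j, Measurable (α j))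
    (v : ℝ →ᵇ ℝ) : Measurable (delayTerm r α v) := by
  have hU := (continuous_weightedPrimitive v).measurable
  exact Finset.measurable_sum _ fun j _ => (hr j).mul (hU.sub (hU.comp (hα j)))

lemma delayTerm_sub (v w : ℝ →ᵇ ℝ) (s : ℝ) :
    delayTerm r α (v - w) s = delayTerm r α v s - delayTerm r α w s := by
  simp only [delayTerm, weightedPrimitive_sub, ← Finset.sum_sub_distrib]
  congr 1 with j
  ring

lemma delayTerm_nonneg (hr₀ : ∀ j t, 0 ≤ r j t) (hα_le : ∀ j t, α j t ≤ t)
    {v : ℝ →ᵇ ℝ} (hv : ∀ t, 0 ≤ v t) (s : ℝ) : 0 ≤ delayTerm r α v s :=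
  Finset.sum_nonneg fun j _ =>
    mul_nonneg (hr₀ j s) (sub_nonneg.2 (weightedPrimitive_mono hv (hα_le j s)))

lemma abs_delayTerm_le (hr₀ : ∀ j t, 0 ≤ r j t) (hr₁ : ∀ t, ∑ j, r j t ≤ 1)
    (hα_le : ∀ j t, α j t ≤ t) (v : ℝ →ᵇ ℝ) (s : ℝ) :
    |delayTerm r α v s| ≤ ‖v‖ * exp (2 * s) / 2 := by
  have hD : 0 ≤ ‖v‖ * exp (2 * s) / 2 := by positivity
  calc |delayTerm r α v s|
      ≤ ∑ j, |r j s * (weightedPrimitive v s - weightedPrimitive v (α j s))| :=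
        Finset.abs_sum_le_sum_abs _ _
    _ ≤ ∑ j, r j s * (‖v‖ * exp (2 * s) / 2) := by
        gcongr with j
        rw [abs_mul, abs_of_nonneg (hr₀ j s)]
        exact mul_le_mul_of_nonneg_left (abs_weightedPrimitive_sub_le v (hα_le j s)) (hr₀ j s)
    _ ≤ ‖v‖ * exp (2 * s) / 2 := by
        rw [← Finset.sum_mul]
        exact mul_le_of_le_one_left hD (hr₁ s)

end DelayTerm

section Picard

variable {ι : Type*} [Fintype ι] {f : ℝ → ℝ} {r α : ι → ℝ → ℝ} {C : ℝ}

variable (f r α) in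
noncomputable def picardIntegral (v : ℝ →ᵇ ℝ) (t : ℝ) : ℝ :=
  ∫ s in 0..t, (f s + delayTerm r α v s)

-- Freezing `t` at `0` keeps this bounded on `(-∞, 0]`.
variable (f r α) in
noncomputable def picardMap (v : ℝ →ᵇ ℝ) (t : ℝ) : ℝ :=
  picardIntegral f r α v (max t 0) / exp (2 * max t 0)

lemma abs_add_delayTerm_le (hf₀ : ∀ t, 0 ≤ f t) (hfC : ∀ t, f t ≤ C) (hr₀ : ∀ j t, 0 ≤ r j t)
    (hr₁ : ∀ t, ∑ j, r j t ≤ 1) (hα_le : ∀ j t, α j t ≤ t) (v : ℝ →ᵇ ℝ) (s : ℝ) :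
    |f s + delayTerm r α v s| ≤ C + ‖v‖ / 2 * exp (2 * s) := by
  have hD := abs_delayTerm_le hr₀ hr₁ hα_le v s
  have hfs : |f s| ≤ C := by rw [abs_of_nonneg (hf₀ s)]; exact hfC s
  linarith [abs_add_le (f s) (delayTerm r α v s)]

lemma intervalIntegrable_add_delayTerm (hf : Measurable f) (hf₀ : ∀ t, 0 ≤ f t)
    (hfC : ∀ t, f t ≤ C) (hr : ∀ j, Measurable (r j)) (hr₀ : ∀ j t, 0 ≤ r j t)
    (hr₁ : ∀ t, ∑ j, r j t ≤ 1) (hα : ∀ j, Measurable (α j)) (hα_le : ∀ j t, α j t ≤ t)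
    (v : ℝ →ᵇ ℝ) (a b : ℝ) :
    IntervalIntegrable (fun s => f s + delayTerm r α v s) volume a b := by
  have hbound : IntervalIntegrable (fun s => C + ‖v‖ / 2 * exp (2 * s)) volume a b := by
    apply Continuous.intervalIntegrable; fun_prop
  refine hbound.mono_fun' (hf.add (measurable_delayTerm hr hα v)).aestronglyMeasurable
    (ae_of_all _ fun s => ?_)
  exact (Real.norm_eq_abs _).trans_le (abs_add_delayTerm_le hf₀ hfC hr₀ hr₁ hα_le v s)

lemma picardIntegral_sub_picardIntegral (hf : Measurable f) (hf₀ : ∀ t, 0 ≤ f t)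
    (hfC : ∀ t, f t ≤ C) (hr : ∀ j, Measurable (r j)) (hr₀ : ∀ j t, 0 ≤ r j t)
    (hr₁ : ∀ t, ∑ j, r j t ≤ 1) (hα : ∀ j, Measurable (α j)) (hα_le : ∀ j t, α j t ≤ t)
    (v w : ℝ →ᵇ ℝ) (t : ℝ) :
    picardIntegral f r α v t - picardIntegral f r α w t =
      ∫ s in 0..t, delayTerm r α (v - w) s := by
  rw [picardIntegral, picardIntegral, ← intervalIntegral.integral_sub
    (intervalIntegrable_add_delayTerm hf hf₀ hfC hr hr₀ hr₁ hα hα_le v 0 t)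
    (intervalIntegrable_add_delayTerm hf hf₀ hfC hr hr₀ hr₁ hα hα_le w 0 t)]
  simp only [delayTerm_sub, add_sub_add_left_eq_sub]

lemma continuous_picardMap (hf : Measurable f) (hf₀ : ∀ t, 0 ≤ f t)
    (hfC : ∀ t, f t ≤ C) (hr : ∀ j, Measurable (r j)) (hr₀ : ∀ j t, 0 ≤ r j t)
    (hr₁ : ∀ t, ∑ j, r j t ≤ 1) (hα : ∀ j, Measurable (α j)) (hα_le : ∀ j t, α j t ≤ t)
    (v : ℝ →ᵇ ℝ) : Continuous (picardMap f r α v) := by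
  have hG : Continuous (picardIntegral f r α v) := intervalIntegral.continuous_primitive
    (intervalIntegrable_add_delayTerm hf hf₀ hfC hr hr₀ hr₁ hα hα_le v) 0
  exact (hG.comp (continuous_id.max continuous_const)).div (by fun_prop) fun t => (exp_pos _).ne'

lemma abs_picardMap_le (hf₀ : ∀ t, 0 ≤ f t) (hfC : ∀ t, f t ≤ C) (hr₀ : ∀ j t, 0 ≤ r j t)
    (hr₁ : ∀ t, ∑ j, r j t ≤ 1) (hα_le : ∀ j t, α j t ≤ t) (v : ℝ →ᵇ ℝ) (t : ℝ) :
    |picardMap f r α v t| ≤ C + ‖v‖ / 4 := by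
  have hC : 0 ≤ C := (hf₀ 0).trans (hfC 0)
  rw [picardMap, abs_div, abs_exp, div_le_iff₀ (exp_pos _)]
  calc |picardIntegral f r α v (max t 0)|
      ≤ (C + ‖v‖ / 2 / 2) * exp (2 * max t 0) :=
        abs_integral_le_of_abs_le_exp hC (by positivity) (le_max_right t 0)
          fun s _ => abs_add_delayTerm_le hf₀ hfC hr₀ hr₁ hα_le v s
    _ = (C + ‖v‖ / 4) * exp (2 * max t 0) := by ring

lemma abs_picardMap_sub_le (hf : Measurable f) (hf₀ : ∀ t, 0 ≤ f t)
    (hfC : ∀ t, f t ≤ C) (hr : ∀ j, Measurable (r j)) (hr₀ : ∀ j t, 0 ≤ r j t)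
    (hr₁ : ∀ t, ∑ j, r j t ≤ 1) (hα : ∀ j, Measurable (α j)) (hα_le : ∀ j t, α j t ≤ t)
    (v w : ℝ →ᵇ ℝ) (t : ℝ) :
    |picardMap f r α v t - picardMap f r α w t| ≤ ‖v - w‖ / 4 := by
  rw [picardMap, picardMap, ← sub_div,
    picardIntegral_sub_picardIntegral hf hf₀ hfC hr hr₀ hr₁ hα hα_le, abs_div, abs_exp,
    div_le_iff₀ (exp_pos _)]
  calc |∫ s in 0..max t 0, delayTerm r α (v - w) s|
      ≤ (0 + ‖v - w‖ / 2 / 2) * exp (2 * max t 0) :=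
        abs_integral_le_of_abs_le_exp le_rfl (by positivity) (le_max_right t 0)
          fun s _ => (abs_delayTerm_le hr₀ hr₁ hα_le (v - w) s).trans_eq (by ring)
    _ = ‖v - w‖ / 4 * exp (2 * max t 0) := by ring

lemma picardMap_nonneg (hf₀ : ∀ t, 0 ≤ f t) (hr₀ : ∀ j t, 0 ≤ r j t)
    (hα_le : ∀ j t, α j t ≤ t) {v : ℝ →ᵇ ℝ} (hv : ∀ t, 0 ≤ v t) (t : ℝ) :
    0 ≤ picardMap f r α v t :=
  div_nonneg (intervalIntegral.integral_nonneg (le_max_right t 0)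
    fun s _ => add_nonneg (hf₀ s) (delayTerm_nonneg hr₀ hα_le hv s)) (exp_pos _).le

lemma exists_nonneg_weighted_eq_picardIntegral (hf : Measurable f) (hf₀ : ∀ t, 0 ≤ f t)
    (hfC : ∀ t, f t ≤ C) (hr : ∀ j, Measurable (r j)) (hr₀ : ∀ j t, 0 ≤ r j t)
    (hr₁ : ∀ t, ∑ j, r j t ≤ 1) (hα : ∀ j, Measurable (α j)) (hα_le : ∀ j t, α j t ≤ t) :
    ∃ v : ℝ →ᵇ ℝ, (∀ t, 0 ≤ v t) ∧ ∀ t, 0 ≤ t → weighted v t = picardIntegral f r α v t := by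
  let T : (ℝ →ᵇ ℝ) → ℝ →ᵇ ℝ := fun v => ofNormedAddCommGroup (picardMap f r α v)
    (continuous_picardMap hf hf₀ hfC hr hr₀ hr₁ hα hα_le v) (C + ‖v‖ / 4)
    fun t => (Real.norm_eq_abs _).trans_le (abs_picardMap_le hf₀ hfC hr₀ hr₁ hα_le v t)
  have hT : ContractingWith (1 / 4) T := by
    refine ⟨by norm_num, LipschitzWith.of_dist_le_mul fun v w =>
      (dist_le (by positivity)).2 fun t => ?_⟩
    rw [Real.dist_eq, dist_eq_norm]
    simpa [T, div_eq_inv_mul] using abs_picardMap_sub_le hf hf₀ hfC hr hr₀ hr₁ hα hα_le v w t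
  let S : Set (ℝ →ᵇ ℝ) := {v | ∀ t, 0 ≤ v t}
  have hS : IsClosed S := by
    simp only [S, Set.ofPred_forall]
    exact isClosed_iInter fun t => isClosed_le continuous_const (continuous_eval_const t)
  have hTS : MapsTo T S S := fun v hv t => picardMap_nonneg hf₀ hr₀ hα_le hv t
  obtain ⟨v, hvS, hfix, -⟩ :=
    ContractingWith.exists_fixedPoint' hS.isComplete hTS (hT.restrict hTS) (x := 0)
      (fun _ => le_rfl) (edist_ne_top _ _)
  refine ⟨v, hvS, fun t ht => ?_⟩
  have hvt : v t = picardMap f r α v t := (congrArg (· t) hfix).symm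
  rw [weighted, hvt, picardMap, max_eq_left ht, mul_div_cancel₀ _ (exp_pos _).ne']

theorem exists_solution_one_le (hf : Measurable f) (hf₀ : ∀ t, 0 ≤ f t)
    (hfC : ∀ t, f t ≤ C) (hr : ∀ j, Measurable (r j)) (hr₀ : ∀ j t, 0 ≤ r j t)
    (hr₁ : ∀ t, ∑ j, r j t ≤ 1) (hα : ∀ j, Measurable (α j)) (hα_le : ∀ j t, α j t ≤ t) :
    ∃ φ u : ℝ → ℝ, Continuous φ ∧ Continuous u ∧ (∀ t, HasDerivAt φ (u t) t) ∧
      (∀ t, 0 ≤ t → 1 ≤ φ t) ∧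
      (∀ a b, IntervalIntegrable (fun s => f s + ∑ j, r j s * (φ s - φ (α j s))) volume a b) ∧
      ∀ t, 0 ≤ t → u t = ∫ s in 0..t, (f s + ∑ j, r j s * (φ s - φ (α j s))) := by
  obtain ⟨v, hv, hfix⟩ :=
    exists_nonneg_weighted_eq_picardIntegral hf hf₀ hfC hr hr₀ hr₁ hα hα_le
  have hD : (fun s => f s + ∑ j, r j s *
      ((1 + weightedPrimitive v s) - (1 + weightedPrimitive v (α j s)))) =
      fun s => f s + delayTerm r α v s := by
    simp only [add_sub_add_left_eq_sub, delayTerm]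
  refine ⟨fun t => 1 + weightedPrimitive v t, weighted v,
    continuous_const.add (continuous_weightedPrimitive v), continuous_weighted v,
    fun t => (hasDerivAt_weightedPrimitive v t).const_add 1, fun t ht => ?_, ?_, ?_⟩
  · have h0 : weightedPrimitive v 0 = 0 := intervalIntegral.integral_same
    linarith [weightedPrimitive_mono hv ht]
  · rw [hD]
    exact intervalIntegrable_add_delayTerm hf hf₀ hfC hr hr₀ hr₁ hα hα_le v
  · rw [hD]
    exact hfix

end Picard

lemma cos_sin_nonneg (x : ℝ) : 0 ≤ cos (sin x) :=
  cos_nonneg_of_mem_Icc ⟨by linarith [neg_one_le_sin x, pi_gt_three],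
    by linarith [sin_le_one x, pi_gt_three]⟩

end AveragedDelayEquation

open AveragedDelayEquation in
lemma exists_isSolutionFrom_sin_sq_cos_sq (α₁ α₂ : ℝ → ℝ)
    (hm₁ : Measurable α₁) (hm₂ : Measurable α₂)
    (hle₁ : ∀ t, 0 ≤ t → α₁ t ≤ t) (hle₂ : ∀ t, 0 ≤ t → α₂ t ≤ t) :
    ∃ φ, IsSolutionFrom 0 (fun _ => 1) (fun _ => 0)
      (fun t => Real.cos (Real.sin (Real.log (1 + t)))) 3
      ![fun t => Real.sin t ^ 2, fun t => Real.cos t ^ 2, fun _ => (-1 : ℝ)]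
      ![α₁, α₂, fun t => t] 0 φ ∧ ∀ t, 0 ≤ t → 1 ≤ φ t := by
  obtain ⟨φ, u, hφ, hu, hderiv, hone, hint, heq⟩ := exists_solution_one_le (C := 1)
    (f := fun t => cos (sin (log (1 + t))))
    (r := ![fun t => sin t ^ 2, fun t => cos t ^ 2])
    (α := ![fun t => min (α₁ t) t, fun t => min (α₂ t) t])
    (by fun_prop) (fun t => cos_sin_nonneg _) (fun t => cos_le_one _)
    (Fin.forall_fin_two.2 ⟨by simp only [Matrix.cons_val_zero]; fun_prop,
      by simp only [Matrix.cons_val_one, Matrix.cons_val_fin_one]; fun_prop⟩)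
    (Fin.forall_fin_two.2 ⟨fun t => sq_nonneg _, fun t => sq_nonneg _⟩)
    (fun t => by simp [Fin.sum_univ_two])
    (Fin.forall_fin_two.2 ⟨hm₁.min measurable_id, hm₂.min measurable_id⟩)
    (Fin.forall_fin_two.2 ⟨fun t => min_le_right _ _, fun t => min_le_right _ _⟩)
  have hrw : ∀ s, 0 ≤ s →
      cos (sin (log (1 + s))) - 0 * u s - ∑ j : Fin 3,
        ![fun t => sin t ^ 2, fun t => cos t ^ 2, fun _ => (-1 : ℝ)] j s *
          φ (![α₁, α₂, fun t => t] j s) =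
      cos (sin (log (1 + s))) + ∑ j : Fin 2, ![fun t => sin t ^ 2, fun t => cos t ^ 2] j s *
        (φ s - φ (![fun t => min (α₁ t) t, fun t => min (α₂ t) t] j s)) := by
    intro s hs
    simp only [zero_mul, sub_zero, Fin.sum_univ_three, Fin.sum_univ_two, Matrix.cons_val_zero,
      Matrix.cons_val_one, Matrix.cons_val, Matrix.cons_val_fin_one, neg_mul, one_mul,
      min_eq_left (hle₁ s hs), min_eq_left (hle₂ s hs)]
    linear_combination (-φ s) * sin_sq_add_cos_sq s
  refine ⟨φ, ⟨le_rfl, hφ, u, hu.continuousOn, fun t _ => (hderiv t).hasDerivWithinAt,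
    fun t ht => ⟨?_, ?_⟩⟩, hone⟩
  · refine (hint 0 t).congr fun s hs => (hrw s ?_).symm
    rw [Set.uIoc_of_le ht] at hs
    exact hs.1.le
  · rw [one_mul, one_mul, heq 0 le_rfl, intervalIntegral.integral_same, zero_add, heq t ht]
    refine intervalIntegral.integral_congr fun s hs => (hrw s ?_).symm
    rw [Set.uIcc_of_le ht] at hs
    exact hs.1

theorem stmt10_general (α₁ α₂ : ℝ → ℝ)
    (hm₁ : Measurable α₁) (hm₂ : Measurable α₂)
    (hle₁ : ∀ t, 0 ≤ t → α₁ t ≤ t) (hle₂ : ∀ t, 0 ≤ t → α₂ t ≤ t) :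
    ¬ EquationOscillatory 0 (fun _ => 1) (fun _ => 0)
      (fun t => Real.cos (Real.sin (Real.log (1 + t)))) 3
      ![fun t => Real.sin t ^ 2, fun t => Real.cos t ^ 2, fun _ => (-1 : ℝ)]
      ![α₁, α₂, fun t => t] := by
  intro hosc
  obtain ⟨φ, hsol, hone⟩ := exists_isSolutionFrom_sin_sq_cos_sq α₁ α₂ hm₁ hm₂ hle₁ hle₂
  obtain ⟨t, ht, hzero⟩ := hosc φ ⟨0, hsol⟩ 0
  linarith [hone t ht]

/-- Example 3.1: the equation
`φ'' + sin² t · φ(α₁ t) + cos² t · φ(α₂ t) - φ(t) = cos (sin (ln (1 + t)))`, `t ≥ 0`,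
is nonoscillatory. -/
theorem stmt10 (α₁ α₂ : ℝ → ℝ)
    (hm₁ : Measurable α₁) (hm₂ : Measurable α₂)
    (hle₁ : ∀ t, 0 ≤ t → α₁ t ≤ t) (hle₂ : ∀ t, 0 ≤ t → α₂ t ≤ t)
    (htend₁ : Filter.Tendsto α₁ Filter.atTop Filter.atTop)
    (htend₂ : Filter.Tendsto α₂ Filter.atTop Filter.atTop) :
    ¬ EquationOscillatory 0 (fun _ => 1) (fun _ => 0)
      (fun t => Real.cos (Real.sin (Real.log (1 + t)))) 3
      ![fun t => Real.sin t ^ 2, fun t => Real.cos t ^ 2, fun _ => (-1 : ℝ)]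
      ![α₁, α₂, fun t => t] :=
  stmt10_general α₁ α₂ hm₁ hm₂ hle₁ hle₂
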